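/- For every subset A of the vertices of the triangular grid graph T_n, the size of the vertex boundary of A is at least the minimum of the vertex boundary size of the initial segment of the simplicial ordering of size |A| and the vertex boundary size of the final segment of the simplicial ordering of size |A|. -/

import Mathlib

/-- Vertex set of the triangular grid graph `T_n`. -/
def TnV (n : ℕ) : Finset (ℕ × ℕ) :=
  (Finset.range (n+1) ×ˢ Finset.range (n+1)).filter (fun v => v.1 + v.2 ≤ n)

/-- Adjacency in the triangular grid graph. -/
def adj (u v : ℕ × ℕ) : Prop :=
  (v.1 = u.1 + 1 ∧ v.2 = u.2) ∨ (u.1 = v.1 + 1 ∧ u.2 = v.2) ∨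
  (v.2 = u.2 + 1 ∧ v.1 = u.1) ∨ (u.2 = v.2 + 1 ∧ u.1 = v.1) ∨
  (v.1 = u.1 + 1 ∧ u.2 = v.2 + 1) ∨ (u.1 = v.1 + 1 ∧ v.2 = u.2 + 1)

instance : ∀ u v : ℕ × ℕ, Decidable (adj u v) := fun u v => by
  unfold adj; infer_instance

/-- The (exterior) vertex boundary of `A` in `T_n`. -/
def boundary (n : ℕ) (A : Finset (ℕ × ℕ)) : Finset (ℕ × ℕ) :=
  (TnV n).filter (fun v => v ∉ A ∧ ∃ u ∈ A, adj u v)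

/-- The neighborhood `N(A)` of `A` in `T_n`. -/
def nbhd (n : ℕ) (A : Finset (ℕ × ℕ)) : Finset (ℕ × ℕ) :=
  (TnV n).filter (fun v => v ∈ A ∨ ∃ u ∈ A, adj u v)

/-- `sle u v` : `u` comes before (or equals) `v` in the simplicial ordering. -/
def sle (u v : ℕ × ℕ) : Prop :=
  u.1 + u.2 < v.1 + v.2 ∨ (u.1 + u.2 = v.1 + v.2 ∧ v.1 ≤ u.1)

/-- `C` is an initial segment of the simplicial ordering on `V(T_n)`. -/
def IsInitSeg (n : ℕ) (C : Finset (ℕ × ℕ)) : Prop :=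
  C ⊆ TnV n ∧ ∀ v ∈ C, ∀ u ∈ TnV n, sle u v → u ∈ C

/-- `D` is a final segment of the simplicial ordering on `V(T_n)`. -/
def IsFinalSeg (n : ℕ) (D : Finset (ℕ × ℕ)) : Prop :=
  D ⊆ TnV n ∧ ∀ v ∈ D, ∀ u ∈ TnV n, sle v u → u ∈ D


private def Tri : ℕ → ℕ
  | 0 => 0
  | n+1 => Tri n + (n+1)

private lemma Tri_succ (n : ℕ) : Tri (n+1) = Tri n + (n+1) := rfl

private lemma Tri_mono : ∀ {a b : ℕ}, a ≤ b → Tri a ≤ Tri b := by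
  have h : Monotone Tri := monotone_nat_of_le_succ (fun n => by rw [Tri_succ]; omega)
  intro a b hab; exact h hab

private lemma le_Tri : ∀ n : ℕ, n ≤ Tri n := by
  intro n; induction n with
  | zero => simp [Tri]
  | succ k ih => rw [Tri_succ]; omega

private lemma Tri_add (a b : ℕ) : Tri (a + b) = Tri a + Tri b + a * b := by
  induction b with
  | zero => simp [Tri]
  | succ k ih =>
      rw [show a + (k+1) = (a+k)+1 from rfl, Tri_succ, ih, Tri_succ]; ring

private lemma N1 {S R A B b : ℕ} (h : S ≤ Tri (R + A)) (hd : A = 0 ∨ A + 1 ≤ B + b) :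
    S + b ≤ Tri (R + B + b) := by
  rcases hd with h0 | h1
  · subst h0
    simp only [Nat.add_zero] at h
    have h2 : Tri (R + (B + b)) = Tri R + Tri (B + b) + R * (B + b) := Tri_add ..
    have h3 : B + b ≤ Tri (B + b) := le_Tri _
    have h4 : R + B + b = R + (B + b) := by ring
    rw [h4, h2]; omega
  · by_cases hb : b ≤ A
    · have h4 : Tri (R+A+1) ≤ Tri (R+B+b) := Tri_mono (by omega)
      have h3 : Tri (R+A+1) = Tri (R+A) + (R+A+1) := Tri_succ _
      omega
    · obtain ⟨d, hd'⟩ : ∃ d, b = A + (d+1) := ⟨b - A - 1, by omega⟩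
      have h2 : Tri (R + A + (d+1)) = Tri (R+A) + Tri (d+1) + (R+A)*(d+1) := Tri_add ..
      have h3 : d + 1 ≤ Tri (d+1) := le_Tri _
      have h5 : Tri (R + A + (d+1)) ≤ Tri (R+B+b) := Tri_mono (by omega)
      have h6 : A * (d+1) ≤ (R+A)*(d+1) := Nat.mul_le_mul_right _ (by omega)
      have h7 : A ≤ A * (d+1) := Nat.le_mul_of_pos_right _ (by omega)
      omega

private lemma N2 {S P B b : ℕ} (h : S ≤ Tri P) (hb : b ≤ P + B) (hB : 1 ≤ B) :
    S + b ≤ Tri (P + B) := by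
  have h2 : Tri (P + B) = Tri P + Tri B + P * B := Tri_add ..
  have h3 : B ≤ Tri B := le_Tri _
  have h4 : P ≤ P * B := Nat.le_mul_of_pos_right _ (by omega)
  omega

private lemma N3 {S R A B b : ℕ} (h : S + Tri (A - 1) ≤ Tri R) (hAR : A ≤ R)
    (hd : (A = 0 ∧ b ≤ B) ∨ (1 ≤ A ∧ b + 1 ≤ B + A)) :
    (S + b) + Tri (b - 1) ≤ Tri (R + B) ∧ b ≤ R + B := by
  have hRB : Tri (R + B) = Tri R + Tri B + R * B := Tri_add ..
  constructor
  · rcases hd with ⟨hA0, hbB⟩ | ⟨hA1, hbd⟩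
    · subst hA0
      simp only [Nat.zero_sub, Tri] at h
      rcases Nat.eq_zero_or_pos b with hb0 | hb1
      · subst hb0; simp only [Nat.zero_sub, Tri]; omega
      · have h1 : Tri b = Tri (b-1) + b := by
          have := Tri_succ (b-1); rw [show b - 1 + 1 = b by omega] at this; omega
        have h2 : Tri b ≤ Tri B := Tri_mono hbB
        omega
    · by_cases hb : b + 1 ≤ A
      · -- drop: b ≤ A - 1
        have h1 : Tri b ≤ Tri (A-1) := Tri_mono (by omega)
        have h2 : Tri b = Tri (b-1) + b := by
          rcases Nat.eq_zero_or_pos b with hb0 | hb1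
          · subst hb0; simp [Tri]
          · have := Tri_succ (b-1); rw [show b - 1 + 1 = b by omega] at this; omega
        have h3 : Tri R ≤ Tri (R + B) := Tri_mono (by omega)
        omega
      · -- rise: b ≥ A
        obtain ⟨d, hd'⟩ : ∃ d, b = A + d := ⟨b - A, by omega⟩
        have hBd : d + 1 ≤ B := by omega
        have h1 : Tri (b-1) = Tri (A-1) + Tri d + (A-1)*d := by
          have := Tri_add (A-1) d
          rw [show A - 1 + d = b - 1 by omega] at this; exact this
        have h2 : Tri (d+1) ≤ Tri B := Tri_mono hBd
        have h3 : Tri (d+1) = Tri d + (d+1) := Tri_succ _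
        have h4 : A * (d+1) ≤ R * B := Nat.mul_le_mul hAR hBd
        have h5 : (A-1)*d ≤ A * d := Nat.mul_le_mul_right _ (by omega)
        have h6 : A * (d+1) = A * d + A := by ring
        omega
  · rcases hd with ⟨hA0, hbB⟩ | ⟨hA1, hbd⟩ <;> omega

private lemma N4 : ∀ (L W : ℕ), (∑ d ∈ Finset.range L, (W - d)) + Tri (W - L) = Tri W := by
  intro L
  induction L with
  | zero => intro W; simp
  | succ k ih =>
      intro W
      rw [Finset.sum_range_succ]
      have h1 := ih W
      by_cases h : k + 1 ≤ W
      · have h2 : Tri (W - k) = Tri (W - (k+1)) + (W - k) := by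
          have := Tri_succ (W - (k+1)); rw [show W - (k+1) + 1 = W - k by omega] at this; omega
        omega
      · have h2 : W - k = 0 := by omega
        have h3 : W - (k+1) = 0 := by omega
        have hT0 : Tri 0 = 0 := rfl
        rw [h2] at h1
        rw [h3]
        rw [h2]
        have hT0 : Tri 0 = 0 := rfl
        omega

private lemma N5 {R y W L : ℕ} (h : y + L ≤ W) :
    Tri (R + y) + (∑ d ∈ Finset.range L, (W - d)) ≤ Tri (R + W) := by
  have h4 := N4 L W
  have hyV : y ≤ W - L := by omega
  have h1 : Tri (R + y) = Tri R + Tri y + R * y := Tri_add ..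
  have h2 : Tri (R + W) = Tri R + Tri W + R * W := Tri_add ..
  have h3 : Tri y ≤ Tri (W - L) := Tri_mono hyV
  have h5 : R * y ≤ R * W := Nat.mul_le_mul_left _ (by omega)
  omega
private lemma sumTri : ∀ m : ℕ, ∑ i ∈ Finset.range m, (i+1) = Tri m := by
  intro m
  induction m with
  | zero => simp [Tri]
  | succ k ih => rw [Finset.sum_range_succ, ih, Tri_succ]

private lemma sumId : ∀ m : ℕ, ∑ i ∈ Finset.range (m+1), i = Tri m := by
  intro m
  induction m with
  | zero => simp [Tri]
  | succ k ih => rw [Finset.sum_range_succ, ih, Tri_succ]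

private lemma invI (n : ℕ) (a β : ℕ → ℕ)
    (ha0 : a 0 ≤ 1)
    (hL1 : ∀ i, i < n → 1 ≤ a i → a i + 1 ≤ β (i+1) + a (i+1)) :
    ∀ j, j ≤ n → (∑ i ∈ Finset.range (j+1), a i) ≤ Tri ((∑ i ∈ Finset.range (j+1), β i) + a j) := by
  intro j
  induction j with
  | zero =>
      intro _
      simp only [zero_add, Finset.sum_range_one]
      exact le_trans (le_Tri (a 0)) (Tri_mono (by omega))
  | succ j ih =>
      intro hj
      have hI := ih (by omega)
      rw [Finset.sum_range_succ (f := a), Finset.sum_range_succ (f := β)]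
      have hd : a j = 0 ∨ a j + 1 ≤ β (j+1) + a (j+1) := by
        by_cases h : a j = 0
        · exact Or.inl h
        · exact Or.inr (hL1 j (by omega) (by omega))
      exact N1 hI hd

private lemma caseA (n : ℕ) (a β : ℕ → ℕ)
    (ha : ∀ i, i ≤ n → a i ≤ i + 1)
    (hL1 : ∀ i, i < n → 1 ≤ a i → a i + 1 ≤ β (i+1) + a (i+1))
    (han : a n = 0)
    (hk1 : 1 ≤ ∑ i ∈ Finset.range (n+1), a i) :
    (∑ i ∈ Finset.range (n+1), a i) ≤ Tri ((∑ i ∈ Finset.range (n+1), β i) - 1) ∧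
    (∑ i ∈ Finset.range (n+1), a i) ≤ Tri n := by
  have hex : ∃ i, i ≤ n ∧ 1 ≤ a i := by
    by_contra h
    push_neg at h
    have hz : ∑ i ∈ Finset.range (n+1), a i = 0 := Finset.sum_eq_zero (fun i hi => by
      have hi' : i ≤ n := by have := Finset.mem_range.1 hi; omega
      have := h i hi'; omega)
    omega
  set M := Nat.findGreatest (fun i => 1 ≤ a i) n with hMdef
  obtain ⟨i0, hi0, hai0⟩ := hex
  have hMspec : 1 ≤ a M := Nat.findGreatest_spec (P := fun i => 1 ≤ a i) hi0 hai0
  have hMle : M ≤ n := Nat.findGreatest_le n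
  have hMgt : ∀ i, M < i → i ≤ n → a i = 0 := by
    intro i h1 h2
    have := Nat.findGreatest_is_greatest (P := fun i => 1 ≤ a i) h1 h2
    omega
  have hMn : M < n := by
    rcases Nat.lt_or_ge M n with h | h
    · exact h
    · exfalso; have : M = n := le_antisymm hMle h; rw [this] at hMspec; omega
  have hsplit : ∑ i ∈ Finset.range (n+1), a i = ∑ i ∈ Finset.range (M+1), a i := by
    have h1 : ∑ i ∈ Finset.Ico 0 (M+1), a i + ∑ i ∈ Finset.Ico (M+1) (n+1), a i
        = ∑ i ∈ Finset.Ico 0 (n+1), a i :=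
      Finset.sum_Ico_consecutive a (by omega) (by omega)
    have hz : ∑ i ∈ Finset.Ico (M+1) (n+1), a i = 0 := Finset.sum_eq_zero (fun i hi => by
      have := Finset.mem_Ico.1 hi; exact hMgt i (by omega) (by omega))
    rw [Finset.range_eq_Ico]
    rw [Finset.range_eq_Ico] at *
    omega
  have hclose : a M + 1 ≤ β (M+1) := by
    have h := hL1 M hMn hMspec
    have h0 : a (M+1) = 0 := hMgt (M+1) (by omega) (by omega)
    omega
  have hinv := invI n a β (by have := ha 0 (by omega); omega) hL1 M (by omega)
  have hr1 : (∑ i ∈ Finset.range (M+1), β i) + a M ≤ (∑ i ∈ Finset.range (n+1), β i) - 1 := by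
    have hs : ∑ i ∈ Finset.range (M+2), β i ≤ ∑ i ∈ Finset.range (n+1), β i :=
      Finset.sum_le_sum_of_subset (Finset.range_subset_range.2 (by omega))
    rw [Finset.sum_range_succ] at hs
    omega
  constructor
  · rw [hsplit]; exact le_trans hinv (Tri_mono hr1)
  · rw [hsplit]
    calc ∑ i ∈ Finset.range (M+1), a i
        ≤ ∑ i ∈ Finset.range (M+1), (i+1) := Finset.sum_le_sum (fun i hi => ha i (by
          have := Finset.mem_range.1 hi; omega))
      _ = Tri (M+1) := sumTri (M+1)
      _ ≤ Tri n := Tri_mono (by omega)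
private lemma caseAlpha (n w : ℕ) (a β : ℕ → ℕ)
    (ha : ∀ i, i ≤ n → a i ≤ i + 1)
    (hL1 : ∀ i, i < n → 1 ≤ a i → a i + 1 ≤ β (i+1) + a (i+1))
    (hL2 : ∀ i, i < n → min (a (i+1)) (i+1) ≤ β i + a i)
    (hL3 : ∀ i, i ≤ n → 1 ≤ a i → a i ≤ i → 1 ≤ β i)
    (hwn : w ≤ n) (hwf : a w = w + 1)
    (htop : ∀ i, w < i → i ≤ n → 1 ≤ a i ∧ a i ≤ i) :
    Tri (n+1) - (∑ i ∈ Finset.range (n+1), a i) ≤ Tri (∑ i ∈ Finset.range (n+1), β i) := by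
  set e : ℕ → ℕ := fun i => (i+1) - a i with he
  have hew : e w = 0 := by simp only [he]; omega
  -- climbing bound above w
  have CL : ∀ j, w ≤ j → j ≤ n →
      (∑ i ∈ Finset.Ico (w+1) (j+1), e i ≤ Tri (∑ i ∈ Finset.Ico (w+1) (j+1), β i)) ∧
      e j ≤ ∑ i ∈ Finset.Ico (w+1) (j+1), β i := by
    intro j hj
    induction j, hj using Nat.le_induction with
    | base =>
        intro _
        rw [Finset.Ico_self]
        simp [hew]
    | succ j hj ih =>
        intro hj1
        obtain ⟨ihS, ihe⟩ := ih (by omega)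
        have haj := ha j (by omega)
        have haj1 := ha (j+1) (by omega)
        have hstep : e (j+1) ≤ e j + β (j+1) := by
          have haj_pos : 1 ≤ a j := by
            rcases Nat.eq_or_lt_of_le hj with h | h
            · rw [← h, hwf]; omega
            · exact (htop j h (by omega)).1
          have h1 := hL1 j (by omega) haj_pos
          simp only [he]; omega
        have hB : 1 ≤ β (j+1) :=
          hL3 (j+1) (by omega) (htop (j+1) (by omega) (by omega)).1 (htop (j+1) (by omega) (by omega)).2
        rw [Finset.sum_Ico_succ_top (by omega : w+1 ≤ j+1) e,
            Finset.sum_Ico_succ_top (by omega : w+1 ≤ j+1) β]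
        constructor
        · exact N2 ihS (by omega) hB
        · omega
  -- descent below w
  have desc : ∀ d j, j + d = w →
      ((∑ i ∈ Finset.Ico j (n+1), e i) + Tri (e j - 1) ≤ Tri (∑ i ∈ Finset.Ico j (n+1), β i)) ∧
      e j ≤ ∑ i ∈ Finset.Ico j (n+1), β i := by
    intro d
    induction d with
    | zero =>
        intro j hj
        have hjw : j = w := by omega
        subst hjw
        have hsplitE : ∑ i ∈ Finset.Ico j (n+1), e i = e j + ∑ i ∈ Finset.Ico (j+1) (n+1), e i :=
          Finset.sum_eq_sum_Ico_succ_bot (by omega) e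
        have hsplitB : ∑ i ∈ Finset.Ico j (n+1), β i = β j + ∑ i ∈ Finset.Ico (j+1) (n+1), β i :=
          Finset.sum_eq_sum_Ico_succ_bot (by omega) β
        obtain ⟨hCS, _⟩ := CL n hwn (le_refl n)
        have hmono : Tri (∑ i ∈ Finset.Ico (j+1) (n+1), β i) ≤ Tri (∑ i ∈ Finset.Ico j (n+1), β i) :=
          Tri_mono (by omega)
        rw [hew]
        have hT0 : Tri (0 - 1) = 0 := rfl
        constructor
        · rw [hsplitE, hew, hT0]; omega
        · omega
    | succ d ih =>
        intro j hj
        have hjw : j < w := by omega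
        obtain ⟨ihS, ihe⟩ := ih (j+1) (by omega)
        have hL2j := hL2 j (by omega)
        have haj := ha j (by omega)
        have haj1 := ha (j+1) (by omega)
        have hd : (e (j+1) = 0 ∧ e j ≤ β j) ∨ (1 ≤ e (j+1) ∧ e j + 1 ≤ β j + e (j+1)) := by
          simp only [he]
          rcases Nat.le_total (a (j+1)) (j+1) with h | h
          · rw [min_eq_left h] at hL2j; omega
          · rw [min_eq_right h] at hL2j; omega
        have hN3 := N3 ihS ihe hd
        have hsplitE : ∑ i ∈ Finset.Ico j (n+1), e i = e j + ∑ i ∈ Finset.Ico (j+1) (n+1), e i :=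
          Finset.sum_eq_sum_Ico_succ_bot (by omega) e
        have hsplitB : ∑ i ∈ Finset.Ico j (n+1), β i = β j + ∑ i ∈ Finset.Ico (j+1) (n+1), β i :=
          Finset.sum_eq_sum_Ico_succ_bot (by omega) β
        have hcomm : β j + ∑ i ∈ Finset.Ico (j+1) (n+1), β i
            = (∑ i ∈ Finset.Ico (j+1) (n+1), β i) + β j := by ring
        rw [hsplitE, hsplitB, hcomm]
        exact ⟨by have := hN3.1; omega, by have := hN3.2; omega⟩
  obtain ⟨hfin, _⟩ := desc w 0 (by omega)
  have hce : (∑ i ∈ Finset.range (n+1), e i) + (∑ i ∈ Finset.range (n+1), a i) = Tri (n+1) := by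
    rw [← Finset.sum_add_distrib]
    rw [show (∑ i ∈ Finset.range (n+1), (e i + a i)) = ∑ i ∈ Finset.range (n+1), (i+1) from
      Finset.sum_congr rfl (fun i hi => by
        have hi' : i ≤ n := by have := Finset.mem_range.1 hi; omega
        have := ha i hi'
        simp only [he]; omega)]
    exact sumTri (n+1)
  rw [Finset.range_eq_Ico] at hce ⊢
  omega
private lemma caseBeta (n w : ℕ) (a β : ℕ → ℕ)
    (ha : ∀ i, i ≤ n → a i ≤ i + 1)
    (hL1 : ∀ i, i < n → 1 ≤ a i → a i + 1 ≤ β (i+1) + a (i+1))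
    (hL2 : ∀ i, i < n → min (a (i+1)) (i+1) ≤ β i + a i)
    (hL3 : ∀ i, i ≤ n → 1 ≤ a i → a i ≤ i → 1 ≤ β i)
    (hwn : w < n) (hw0 : a w = 0)
    (htop : ∀ i, w < i → i ≤ n → 1 ≤ a i ∧ a i ≤ i) :
    (∑ i ∈ Finset.range (n+1), a i) ≤ Tri ((∑ i ∈ Finset.range (n+1), β i) - 1) ∧
    (∑ i ∈ Finset.range (n+1), a i) ≤ Tri n := by
  have hx1 : a (w+1) ≤ β w := by
    have h := hL2 w hwn
    have h2 := (htop (w+1) (by omega) (by omega)).2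
    rw [min_eq_left (by omega)] at h
    omega
  have hb1 : ∀ i, w < i → i ≤ n → 1 ≤ β i := fun i h1 h2 =>
    hL3 i h2 (htop i h1 h2).1 (htop i h1 h2).2
  -- climbing bound for a above the gap
  have hQ : ∀ j, w+1 ≤ j → j ≤ n → a j ≤ β w + ∑ i ∈ Finset.Ico (w+1) j, β i := by
    intro j hj
    induction j, hj using Nat.le_induction with
    | base =>
        intro _
        rw [Finset.Ico_self]
        simpa using hx1
    | succ j hj ih =>
        intro hj1
        have h1 := ih (by omega)
        have hstep : a (j+1) ≤ a j + β j := by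
          have h := hL2 j (by omega)
          have h2 := (htop (j+1) (by omega) (by omega)).2
          rw [min_eq_left (by omega)] at h
          omega
        rw [Finset.sum_Ico_succ_top (by omega : w+1 ≤ j) β]
        omega
  set W := β w + ∑ i ∈ Finset.Ico (w+1) n, β i with hWdef
  have hstair : ∀ j, w+1 ≤ j → j ≤ n → a j + (n - j) ≤ W := by
    intro j h1 h2
    have hQ' := hQ j h1 h2
    have htail : (n - j) ≤ ∑ i ∈ Finset.Ico j n, β i := by
      calc (n - j) = ∑ _i ∈ Finset.Ico j n, 1 := by simp
        _ ≤ ∑ i ∈ Finset.Ico j n, β i := Finset.sum_le_sum (fun i hi => by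
            have := Finset.mem_Ico.1 hi
            exact hb1 i (by omega) (by omega))
    have hcons : (∑ i ∈ Finset.Ico (w+1) j, β i) + (∑ i ∈ Finset.Ico j n, β i)
        = ∑ i ∈ Finset.Ico (w+1) n, β i := Finset.sum_Ico_consecutive β h1 h2
    omega
  -- staircase sum bound for the part above the gap
  have hrix : ∀ m, m ≤ n - w →
      ∑ j ∈ Finset.Ico (n+1-m) (n+1), a j ≤ ∑ d ∈ Finset.range m, (W - d) := by
    intro m
    induction m with
    | zero => intro _; simp
    | succ m ih =>
        intro hm
        have ih' := ih (by omega)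
        have hb : n+1-(m+1) < n+1 := by omega
        rw [Finset.sum_eq_sum_Ico_succ_bot hb a, Finset.sum_range_succ]
        have hidx : n+1-(m+1)+1 = n+1-m := by omega
        rw [hidx]
        have hs := hstair (n-m) (by omega) (by omega)
        have hidx2 : n+1-(m+1) = n-m := by omega
        rw [hidx2]
        have : a (n-m) ≤ W - m := by omega
        omega
  have hktop : ∑ j ∈ Finset.Ico (w+1) (n+1), a j ≤ ∑ d ∈ Finset.range (n-w), (W - d) := by
    have := hrix (n-w) (le_refl _)
    rw [show n+1-(n-w) = w+1 by omega] at this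
    exact this
  -- the part below the gap
  have hyex : ∃ y, ((∑ i ∈ Finset.range w, a i) ≤ Tri ((∑ i ∈ Finset.range w, β i) + y)
      ∧ y + 1 ≤ β w) := by
    rcases Nat.eq_zero_or_pos w with hw | hw
    · refine ⟨0, ?_, ?_⟩
      · subst hw; simp
      · have := (htop (w+1) (by omega) (by omega)).1
        omega
    · refine ⟨a (w-1), ?_, ?_⟩
      · have h := invI n a β (by have := ha 0 (by omega); omega) hL1 (w-1) (by omega)
        rw [show w - 1 + 1 = w by omega] at h
        exact h
      · by_cases hy : a (w-1) = 0
        · rw [hy]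
          have := (htop (w+1) (by omega) (by omega)).1
          omega
        · have h := hL1 (w-1) (by omega) (by omega)
          rw [show w - 1 + 1 = w by omega] at h
          omega
  obtain ⟨y, hkb, hyx⟩ := hyex
  have hWL : y + (n - w) ≤ W := by
    have hmid : (n - w - 1) ≤ ∑ i ∈ Finset.Ico (w+1) n, β i := by
      calc (n - w - 1) = ∑ _i ∈ Finset.Ico (w+1) n, 1 := by simp; omega
        _ ≤ ∑ i ∈ Finset.Ico (w+1) n, β i := Finset.sum_le_sum (fun i hi => by
            have := Finset.mem_Ico.1 hi
            exact hb1 i (by omega) (by omega))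
    omega
  have hN5 := N5 (R := ∑ i ∈ Finset.range w, β i) hWL
  -- splits of the full sums
  have hksplit : ∑ i ∈ Finset.range (n+1), a i
      = (∑ i ∈ Finset.range w, a i) + a w + ∑ j ∈ Finset.Ico (w+1) (n+1), a j := by
    have h1 : ∑ i ∈ Finset.Ico 0 w, a i + ∑ i ∈ Finset.Ico w (n+1), a i
        = ∑ i ∈ Finset.Ico 0 (n+1), a i := Finset.sum_Ico_consecutive a (by omega) (by omega)
    have h2 : ∑ i ∈ Finset.Ico w (n+1), a i = a w + ∑ i ∈ Finset.Ico (w+1) (n+1), a i :=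
      Finset.sum_eq_sum_Ico_succ_bot (by omega) a
    rw [Finset.range_eq_Ico, Finset.range_eq_Ico]
    omega
  have hrsplit : ∑ i ∈ Finset.range (n+1), β i
      = (∑ i ∈ Finset.range w, β i) + β w + (∑ i ∈ Finset.Ico (w+1) n, β i) + β n := by
    have h1 : ∑ i ∈ Finset.Ico 0 w, β i + ∑ i ∈ Finset.Ico w (n+1), β i
        = ∑ i ∈ Finset.Ico 0 (n+1), β i := Finset.sum_Ico_consecutive β (by omega) (by omega)
    have h2 : ∑ i ∈ Finset.Ico w (n+1), β i = β w + ∑ i ∈ Finset.Ico (w+1) (n+1), β i :=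
      Finset.sum_eq_sum_Ico_succ_bot (by omega) β
    have h3 : ∑ i ∈ Finset.Ico (w+1) (n+1), β i = (∑ i ∈ Finset.Ico (w+1) n, β i) + β n :=
      Finset.sum_Ico_succ_top (by omega) β
    rw [Finset.range_eq_Ico, Finset.range_eq_Ico]
    omega
  have hbn : 1 ≤ β n := hb1 n (by omega) (le_refl n)
  have hkmain : ∑ i ∈ Finset.range (n+1), a i ≤ Tri ((∑ i ∈ Finset.range w, β i) + W) := by
    rw [hksplit, hw0]
    omega
  constructor
  · refine le_trans hkmain (Tri_mono ?_)
    rw [hrsplit]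
    omega
  · -- k ≤ Tri n
    have h1 : ∑ i ∈ Finset.range w, a i ≤ ∑ i ∈ Finset.range w, (i+1) :=
      Finset.sum_le_sum (fun i hi => ha i (by have := Finset.mem_range.1 hi; omega))
    have h1' : ∑ i ∈ Finset.range w, (i+1) = Tri w := sumTri w
    have h2 : ∑ j ∈ Finset.Ico (w+1) (n+1), a j ≤ ∑ j ∈ Finset.Ico (w+1) (n+1), j :=
      Finset.sum_le_sum (fun i hi => by
        have := Finset.mem_Ico.1 hi
        exact (htop i (by omega) (by omega)).2)
    have h3 : (∑ j ∈ Finset.Ico 0 (w+1), j) + ∑ j ∈ Finset.Ico (w+1) (n+1), j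
        = ∑ j ∈ Finset.Ico 0 (n+1), j := Finset.sum_Ico_consecutive _ (by omega) (by omega)
    have h4 : ∑ j ∈ Finset.range (n+1), j = Tri n := sumId n
    have h5 : ∑ j ∈ Finset.range (w+1), j = Tri w := sumId w
    rw [Finset.range_eq_Ico] at h4 h5
    rw [hksplit, hw0]
    omega

private lemma master (n : ℕ) (a β : ℕ → ℕ)
    (ha : ∀ i, i ≤ n → a i ≤ i + 1)
    (hL1 : ∀ i, i < n → 1 ≤ a i → a i + 1 ≤ β (i+1) + a (i+1))
    (hL2 : ∀ i, i < n → min (a (i+1)) (i+1) ≤ β i + a i)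
    (hL3 : ∀ i, i ≤ n → 1 ≤ a i → a i ≤ i → 1 ≤ β i)
    (hk1 : 1 ≤ ∑ i ∈ Finset.range (n+1), a i) :
    (Tri (n+1) - ∑ i ∈ Finset.range (n+1), a i) ≤ Tri (∑ i ∈ Finset.range (n+1), β i) ∨
    ((∑ i ∈ Finset.range (n+1), a i) ≤ Tri ((∑ i ∈ Finset.range (n+1), β i) - 1) ∧
     (∑ i ∈ Finset.range (n+1), a i) ≤ Tri n) := by
  by_cases han : a n = 0
  · exact Or.inr (caseA n a β ha hL1 han hk1)
  · have hP0 : a 0 = 0 ∨ a 0 = 0 + 1 := by have := ha 0 (by omega); omega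
    set w := Nat.findGreatest (fun i => a i = 0 ∨ a i = i + 1) n with hwdef
    have hPw : a w = 0 ∨ a w = w + 1 :=
      Nat.findGreatest_spec (P := fun i => a i = 0 ∨ a i = i + 1) (Nat.zero_le n) hP0
    have hwn : w ≤ n := Nat.findGreatest_le n
    have htop : ∀ i, w < i → i ≤ n → 1 ≤ a i ∧ a i ≤ i := by
      intro i h1 h2
      have hni := Nat.findGreatest_is_greatest (P := fun i => a i = 0 ∨ a i = i + 1) h1 h2
      have := ha i h2
      push_neg at hni
      omega
    rcases hPw with hw0 | hwf
    · have hwltn : w < n := by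
        rcases Nat.eq_or_lt_of_le hwn with h | h
        · exfalso; rw [h] at hw0; exact han hw0
        · exact h
      exact Or.inr (caseBeta n w a β ha hL1 hL2 hL3 hwltn hw0 htop)
    · exact Or.inl (caseAlpha n w a β ha hL1 hL2 hL3 hwn hwf htop)
private lemma mem_TnV {n : ℕ} {v : ℕ × ℕ} : v ∈ TnV n ↔ v.1 + v.2 ≤ n := by
  unfold TnV
  simp only [Finset.mem_filter, Finset.mem_product, Finset.mem_range]
  omega

private lemma mem_boundary {n : ℕ} {A : Finset (ℕ×ℕ)} {v : ℕ×ℕ} :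
    v ∈ boundary n A ↔ v ∈ TnV n ∧ v ∉ A ∧ ∃ u ∈ A, adj u v := by
  unfold boundary
  simp [Finset.mem_filter]

private def slc (S : Finset (ℕ × ℕ)) (i : ℕ) : Finset ℕ :=
  (S.filter (fun v => v.1 + v.2 = i)).image Prod.fst

private lemma mem_slc {S : Finset (ℕ × ℕ)} {i x : ℕ} :
    x ∈ slc S i ↔ ∃ y, (x, y) ∈ S ∧ x + y = i := by
  unfold slc
  simp only [Finset.mem_image, Finset.mem_filter]
  constructor
  · rintro ⟨⟨vx, vy⟩, ⟨hv, hs⟩, rfl⟩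
    exact ⟨vy, hv, hs⟩
  · rintro ⟨y, hy, hs⟩
    exact ⟨(x, y), ⟨hy, hs⟩, rfl⟩

private lemma card_slc (S : Finset (ℕ × ℕ)) (i : ℕ) :
    (slc S i).card = (S.filter (fun v => v.1 + v.2 = i)).card := by
  unfold slc
  apply Finset.card_image_of_injOn
  intro u hu v hv huv
  simp only [Finset.coe_filter, Set.mem_setOf_eq] at hu hv
  have h2 : u.2 = v.2 := by omega
  exact Prod.ext huv h2

private lemma card_eq_sum_slc {n : ℕ} {S : Finset (ℕ × ℕ)} (hS : S ⊆ TnV n) :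
    S.card = ∑ i ∈ Finset.range (n+1), (slc S i).card := by
  have h := Finset.card_eq_sum_card_fiberwise (f := fun v : ℕ×ℕ => v.1 + v.2)
      (s := S) (t := Finset.range (n+1)) (fun v hv => Finset.mem_range.2 (by
        show v.1 + v.2 < n + 1
        have := mem_TnV.1 (hS hv); omega))
  rw [h]
  exact Finset.sum_congr rfl (fun i _ => (card_slc S i).symm)

private lemma slc_le {n : ℕ} {A : Finset (ℕ×ℕ)} (hA : A ⊆ TnV n) {i x : ℕ}
    (hx : x ∈ slc A i) : x ≤ i := by
  obtain ⟨y, hy, hs⟩ := mem_slc.1 hx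
  omega

private lemma shadow_mem {n : ℕ} {A : Finset (ℕ×ℕ)} {u : ℕ×ℕ} {x y j : ℕ}
    (hu : u ∈ A) (hj : x + y = j) (hle : j ≤ n) (hadj : adj u (x, y)) :
    x ∈ slc A j ∪ slc (boundary n A) j := by
  rw [Finset.mem_union, mem_slc, mem_slc]
  by_cases h : (x, y) ∈ A
  · exact Or.inl ⟨y, h, hj⟩
  · refine Or.inr ⟨y, ?_, hj⟩
    refine mem_boundary.2 ⟨mem_TnV.2 ?_, h, u, hu, hadj⟩
    show x + y ≤ n
    omega

private lemma SL1 {n : ℕ} {A : Finset (ℕ×ℕ)} (hA : A ⊆ TnV n) {i : ℕ} (hi : i < n)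
    (h1 : 1 ≤ (slc A i).card) :
    (slc A i).card + 1 ≤ (slc (boundary n A) (i+1)).card + (slc A (i+1)).card := by
  have hne : (slc A i).Nonempty := Finset.card_pos.1 (by omega)
  set x0 := (slc A i).max' hne with hx0
  have hx0m : x0 ∈ slc A i := (slc A i).max'_mem hne
  obtain ⟨y0, hy0, hs0⟩ := mem_slc.1 hx0m
  have hsub : insert (x0+1) (slc A i) ⊆ slc A (i+1) ∪ slc (boundary n A) (i+1) := by
    intro x hx
    rcases Finset.mem_insert.1 hx with h | h
    · subst h
      exact shadow_mem hy0 (by omega) (by omega) (Or.inl ⟨rfl, rfl⟩)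
    · obtain ⟨y, hy, hs⟩ := mem_slc.1 h
      exact shadow_mem hy (by omega : x + (y+1) = i+1) (by omega)
        (Or.inr (Or.inr (Or.inl ⟨rfl, rfl⟩)))
  have hnotmem : x0 + 1 ∉ slc A i := by
    intro hmem
    have := (slc A i).le_max' _ hmem
    omega
  have hcard : (insert (x0+1) (slc A i)).card = (slc A i).card + 1 :=
    Finset.card_insert_of_notMem hnotmem
  have h2 : (insert (x0+1) (slc A i)).card ≤ (slc A (i+1) ∪ slc (boundary n A) (i+1)).card :=
    Finset.card_le_card hsub
  have h3 := Finset.card_union_le (slc A (i+1)) (slc (boundary n A) (i+1))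
  omega

private lemma SL2 {n : ℕ} {A : Finset (ℕ×ℕ)} (hA : A ⊆ TnV n) {i : ℕ} (hi : i < n) :
    min ((slc A (i+1)).card) (i+1) ≤ (slc (boundary n A) i).card + (slc A i).card := by
  set S := slc A (i+1) with hS
  set U := slc A i ∪ slc (boundary n A) i with hU
  have hUcard : U.card ≤ (slc A i).card + (slc (boundary n A) i).card :=
    Finset.card_union_le _ _
  have hSle : ∀ x ∈ S, x ≤ i + 1 := fun x hx => slc_le hA hx
  have hdown1 : ∀ x ∈ S, 1 ≤ x → (x - 1) ∈ U := by
    intro x hx hx1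
    obtain ⟨y, hy, hs⟩ := mem_slc.1 hx
    exact shadow_mem hy (by omega : (x-1) + y = i) (by omega)
      (Or.inr (Or.inl ⟨by omega, rfl⟩))
  have hdown2 : ∀ x ∈ S, x ≤ i → x ∈ U := by
    intro x hx hxi
    obtain ⟨y, hy, hs⟩ := mem_slc.1 hx
    have hy1 : 1 ≤ y := by omega
    have hadj : adj (x, y) (x, y - 1) := Or.inr (Or.inr (Or.inr (Or.inl ⟨by omega, rfl⟩)))
    exact shadow_mem hy (by omega : x + (y-1) = i) (by omega) hadj
  have hmin1 : min (S.card) (i+1) ≤ S.card := min_le_left _ _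
  have hmin2 : min (S.card) (i+1) ≤ i+1 := min_le_right _ _
  by_cases h0 : (0:ℕ) ∈ S
  · by_cases hI : (i+1) ∈ S
    · by_cases hful : i + 2 ≤ S.card
      · have hSsub : S ⊆ Finset.range (i+2) := fun x hx => Finset.mem_range.2 (by
          have := hSle x hx; omega)
        have hrsub : Finset.range (i+1) ⊆ U := by
          intro x hx
          have hxi : x ≤ i := by have := Finset.mem_range.1 hx; omega
          have hxS : x ∈ S := by
            have hSeq : S = Finset.range (i+2) :=
              Finset.eq_of_subset_of_card_le hSsub (by simpa using hful)
            rw [hSeq]; exact Finset.mem_range.2 (by omega)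
          exact hdown2 x hxS hxi
        have hc : i + 1 ≤ U.card := by
          have := Finset.card_le_card hrsub
          simpa using this
        omega
      · have hSsub : S ⊆ Finset.range (i+2) := fun x hx => Finset.mem_range.2 (by
          have := hSle x hx; omega)
        have hTne : (Finset.range (i+2) \ S).Nonempty := by
          rw [← Finset.card_pos, Finset.card_sdiff_of_subset hSsub]
          simp only [Finset.card_range]
          omega
        obtain ⟨g, hg⟩ := hTne
        rw [Finset.mem_sdiff, Finset.mem_range] at hg
        obtain ⟨hglt, hgS⟩ := hg
        have hg0 : g ≠ 0 := fun h => hgS (h ▸ h0)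
        have hgi : g ≠ i+1 := fun h => hgS (h ▸ hI)
        have hinj : Set.InjOn (fun x => if x < g then x else x - 1) S := by
          intro x hx y hy hxy
          have hxg : x ≠ g := fun h => hgS (h ▸ hx)
          have hyg : y ≠ g := fun h => hgS (h ▸ hy)
          simp only at hxy
          split_ifs at hxy <;> omega
        have hmaps : ∀ x ∈ S, (if x < g then x else x - 1) ∈ U := by
          intro x hx
          have hxg : x ≠ g := fun h => hgS (h ▸ hx)
          by_cases hlt : x < g
          · simp only [if_pos hlt]
            exact hdown2 x hx (by omega)
          · simp only [if_neg hlt]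
            exact hdown1 x hx (by omega)
        have := Finset.card_le_card_of_injOn _ hmaps hinj
        omega
    · have hsub : S ⊆ U := fun x hx => hdown2 x hx (by
        have := hSle x hx
        have : x ≠ i+1 := fun h => hI (h ▸ hx)
        omega)
      have := Finset.card_le_card hsub
      omega
  · have hinj : Set.InjOn (fun x : ℕ => x - 1) S := by
      intro x hx y hy hxy
      have hx0 : x ≠ 0 := fun h => h0 (h ▸ hx)
      have hy0 : y ≠ 0 := fun h => h0 (h ▸ hy)
      simp only at hxy
      omega
    have hmaps : ∀ x ∈ S, x - 1 ∈ U := fun x hx => hdown1 x hx (by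
      have : x ≠ 0 := fun h => h0 (h ▸ hx)
      omega)
    have := Finset.card_le_card_of_injOn _ hmaps hinj
    omega

private lemma SL3 {n : ℕ} {A : Finset (ℕ×ℕ)} (hA : A ⊆ TnV n) {i : ℕ} (hi : i ≤ n)
    (h1 : 1 ≤ (slc A i).card) (h2 : (slc A i).card ≤ i) :
    1 ≤ (slc (boundary n A) i).card := by
  set S := slc A i with hS
  have hne : S.Nonempty := Finset.card_pos.1 (by omega)
  have hSsub : S ⊆ Finset.range (i+1) := fun x hx => Finset.mem_range.2 (by
    have := slc_le hA hx; omega)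
  have hTne : (Finset.range (i+1) \ S).Nonempty := by
    rw [← Finset.card_pos, Finset.card_sdiff_of_subset hSsub]
    simp only [Finset.card_range]
    omega
  set g := (Finset.range (i+1) \ S).max' hTne with hgdef
  have hgmem : g ∈ Finset.range (i+1) \ S := Finset.max'_mem _ _
  rw [Finset.mem_sdiff, Finset.mem_range] at hgmem
  obtain ⟨hglt, hgS⟩ := hgmem
  have hgmax : ∀ x, g < x → x ≤ i → x ∈ S := by
    intro x hx1 hx2
    by_contra hxS
    have : x ∈ Finset.range (i+1) \ S := Finset.mem_sdiff.2 ⟨Finset.mem_range.2 (by omega), hxS⟩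
    have := Finset.le_max' _ _ this
    omega
  -- find a boundary vertex in diagonal i
  have hbd : ∃ z, z ∈ slc (boundary n A) i := by
    by_cases hgi : g = i
    · -- take max of S ; its successor is missing
      set x0 := S.max' hne with hx0def
      have hx0m : x0 ∈ S := S.max'_mem hne
      obtain ⟨y, hy, hs⟩ := mem_slc.1 hx0m
      have hx0i : x0 ≠ i := fun h => hgS (by rw [hgi]; rw [← h]; exact hx0m)
      have hx0lt : x0 < i := by
        have := slc_le hA hx0m; omega
      have hy1 : 1 ≤ y := by omega
      have hnot : ((x0+1 : ℕ), y - 1) ∉ A := by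
        intro hmem
        have : x0 + 1 ∈ S := mem_slc.2 ⟨y - 1, hmem, by omega⟩
        have := S.le_max' _ this
        omega
      refine ⟨x0 + 1, mem_slc.2 ⟨y - 1, ?_, by omega⟩⟩
      refine mem_boundary.2 ⟨mem_TnV.2 (by show x0+1 + (y-1) ≤ n; omega), hnot, (x0, y), hy, ?_⟩
      show adj (x0, y) (x0+1, y-1)
      exact Or.inr (Or.inr (Or.inr (Or.inr (Or.inl ⟨rfl, by omega⟩))))
    · have hgi' : g < i := by omega
      have hg1S : g + 1 ∈ S := hgmax (g+1) (by omega) (by omega)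
      obtain ⟨y, hy, hs⟩ := mem_slc.1 hg1S
      have hnot : ((g : ℕ), y + 1) ∉ A := by
        intro hmem
        exact hgS (mem_slc.2 ⟨y + 1, hmem, by omega⟩)
      refine ⟨g, mem_slc.2 ⟨y + 1, ?_, by omega⟩⟩
      refine mem_boundary.2 ⟨mem_TnV.2 (by show g + (y+1) ≤ n; omega), hnot, (g+1, y), hy, ?_⟩
      show adj (g+1, y) (g, y+1)
      exact Or.inr (Or.inr (Or.inr (Or.inr (Or.inr ⟨rfl, rfl⟩))))
  obtain ⟨z, hz⟩ := hbd
  exact Finset.card_pos.2 ⟨z, hz⟩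
private lemma adj_sum {u v : ℕ×ℕ} (h : adj u v) :
    v.1+v.2 ≤ u.1+u.2+1 ∧ u.1+u.2 ≤ v.1+v.2+1 := by
  unfold adj at h; omega

private lemma adj_fst_up {u v : ℕ×ℕ} (h : adj u v) (hs : u.1+u.2+1 = v.1+v.2) :
    u.1 ≤ v.1 := by
  unfold adj at h; omega

private lemma adj_fst_down {u v : ℕ×ℕ} (h : adj u v) (hs : v.1+v.2+1 = u.1+u.2) :
    v.1 ≤ u.1 := by
  unfold adj at h; omega

private lemma slc_TnV (n i : ℕ) (hi : i ≤ n) : slc (TnV n) i = Finset.range (i+1) := by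
  ext x
  rw [mem_slc, Finset.mem_range]
  constructor
  · rintro ⟨y, _, hs⟩; omega
  · intro hx
    exact ⟨i - x, mem_TnV.2 (by show x + (i-x) ≤ n; omega), by omega⟩

private lemma card_TnV (n : ℕ) : (TnV n).card = Tri (n+1) := by
  rw [card_eq_sum_slc (Finset.Subset.refl (TnV n))]
  rw [Finset.sum_congr rfl (fun i hi => by
    rw [slc_TnV n i (by have := Finset.mem_range.1 hi; omega), Finset.card_range])]
  exact sumTri (n+1)

private def low (n s : ℕ) : Finset (ℕ×ℕ) := (TnV n).filter (fun v => v.1 + v.2 < s)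

private lemma mem_low {n s : ℕ} {v : ℕ×ℕ} : v ∈ low n s ↔ v.1+v.2 ≤ n ∧ v.1+v.2 < s := by
  unfold low
  rw [Finset.mem_filter, mem_TnV]

private lemma card_low (n : ℕ) : ∀ s, s ≤ n+1 → (low n s).card = Tri s := by
  intro s
  induction s with
  | zero =>
      intro _
      have : low n 0 = ∅ := by
        ext v; simp [mem_low]
      rw [this]; rfl
  | succ s ih =>
      intro hs
      have hsplit : low n (s+1) = low n s ∪ (TnV n).filter (fun v => v.1+v.2 = s) := by
        ext v
        rw [Finset.mem_union, mem_low, mem_low, Finset.mem_filter, mem_TnV]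
        omega
      have hdisj : Disjoint (low n s) ((TnV n).filter (fun v => v.1+v.2 = s)) := by
        rw [Finset.disjoint_left]
        intro v hv hv2
        rw [mem_low] at hv
        rw [Finset.mem_filter] at hv2
        omega
      rw [hsplit, Finset.card_union_of_disjoint hdisj, ih (by omega)]
      have hdc : ((TnV n).filter (fun v => v.1+v.2 = s)).card = s+1 := by
        rw [← card_slc, slc_TnV n s (by omega), Finset.card_range]
      rw [hdc, Tri_succ]

private lemma card_diag_filter_ge (n s c : ℕ) :
    (((TnV n).filter (fun v => v.1 + v.2 = s ∧ c ≤ v.1)).card) ≤ s + 1 - c := by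
  have hsub : (TnV n).filter (fun v => v.1+v.2 = s ∧ c ≤ v.1)
      ⊆ (Finset.Icc c s).image (fun x => (x, s - x)) := by
    intro v hv
    rw [Finset.mem_filter] at hv
    rw [Finset.mem_image]
    refine ⟨v.1, Finset.mem_Icc.2 (by omega), ?_⟩
    have : v.2 = s - v.1 := by omega
    rw [← this]
  have h1 := Finset.card_le_card hsub
  have h2 := Finset.card_image_le (s := Finset.Icc c s) (f := fun x => (x, s - x))
  have h3 : (Finset.Icc c s).card = s + 1 - c := Nat.card_Icc c s
  omega

private lemma card_diag_filter_le (n s c : ℕ) :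
    (((TnV n).filter (fun v => v.1 + v.2 = s ∧ v.1 ≤ c)).card) ≤ c + 1 := by
  have hsub : (TnV n).filter (fun v => v.1+v.2 = s ∧ v.1 ≤ c)
      ⊆ (Finset.range (c+1)).image (fun x => (x, s - x)) := by
    intro v hv
    rw [Finset.mem_filter] at hv
    rw [Finset.mem_image]
    refine ⟨v.1, Finset.mem_range.2 (by omega), ?_⟩
    have : v.2 = s - v.1 := by omega
    rw [← this]
  have h1 := Finset.card_le_card hsub
  have h2 := Finset.card_image_le (s := Finset.range (c+1)) (f := fun x => (x, s - x))
  have h3 : (Finset.range (c+1)).card = c + 1 := Finset.card_range _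
  omega

private lemma initseg_struct (n m : ℕ) (F : Finset (ℕ×ℕ)) (hF : IsInitSeg n F)
    (hmn : m ≤ n) (hlow : Tri m < F.card) (hhigh : F.card ≤ Tri (m+1)) :
    (∀ v ∈ F, v.1 + v.2 ≤ m) ∧
    (∀ u : ℕ×ℕ, u.1 + u.2 < m → u ∈ F) ∧
    (∀ x, x ≤ m → Tri (m+1) ≤ F.card + x → ((x, m - x) : ℕ×ℕ) ∈ F) ∧
    (∀ v ∈ F, v.1 + v.2 = m → Tri (m+1) ≤ F.card + v.1) := by
  have hTm1 : Tri (m+1) = Tri m + (m+1) := Tri_succ m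
  have st1 : ∀ v ∈ F, v.1 + v.2 ≤ m := by
    intro v hv
    by_contra hsum
    push_neg at hsum
    have hsub : insert v (low n (m+1)) ⊆ F := by
      intro u hu
      rcases Finset.mem_insert.1 hu with h | h
      · subst h; exact hv
      · rw [mem_low] at h
        exact hF.2 v hv u (mem_TnV.2 (by omega)) (Or.inl (by omega))
    have hvnot : v ∉ low n (m+1) := by rw [mem_low]; omega
    have hcard := Finset.card_le_card hsub
    rw [Finset.card_insert_of_notMem hvnot, card_low n (m+1) (by omega)] at hcard
    omega
  have st2 : ∀ u : ℕ×ℕ, u.1 + u.2 < m → u ∈ F := by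
    intro u hsum
    by_contra huF
    have huT : u ∈ TnV n := mem_TnV.2 (by omega)
    set s0 := u.1 + u.2 with hs0
    have hsub : F ⊆ (low n s0) ∪ ((TnV n).filter (fun v => v.1+v.2 = s0 ∧ u.1+1 ≤ v.1)) := by
      intro v hv
      have hnsle : ¬ sle u v := fun hs => huF (hF.2 v hv u huT hs)
      unfold sle at hnsle
      push_neg at hnsle
      have hvT : v ∈ TnV n := hF.1 hv
      rw [Finset.mem_union, mem_low, Finset.mem_filter, mem_TnV] at *
      omega
    have hcard := Finset.card_le_card hsub
    have hu1 := Finset.card_union_le (low n s0) ((TnV n).filter (fun v => v.1+v.2 = s0 ∧ u.1+1 ≤ v.1))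
    have hc1 : (low n s0).card = Tri s0 := card_low n s0 (by omega)
    have hc2 := card_diag_filter_ge n s0 (u.1+1)
    have hc3 : Tri (s0+1) = Tri s0 + (s0+1) := Tri_succ s0
    have hc4 : Tri (s0+1) ≤ Tri m := Tri_mono (by omega)
    omega
  have st3 : ∀ x, x ≤ m → Tri (m+1) ≤ F.card + x → ((x, m - x) : ℕ×ℕ) ∈ F := by
    intro x hx hcard
    by_contra hw
    have hwT : ((x, m-x) : ℕ×ℕ) ∈ TnV n := mem_TnV.2 (by show x + (m-x) ≤ n; omega)
    have hsub : F ⊆ (low n m) ∪ ((TnV n).filter (fun v => v.1+v.2 = m ∧ x+1 ≤ v.1)) := by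
      intro v hv
      have hnsle : ¬ sle (x, m-x) v := fun hs => hw (hF.2 v hv _ hwT hs)
      unfold sle at hnsle
      push_neg at hnsle
      have hvT : v ∈ TnV n := hF.1 hv
      rw [Finset.mem_union, mem_low, Finset.mem_filter, mem_TnV] at *
      simp only at hnsle
      omega
    have hcard2 := Finset.card_le_card hsub
    have hu1 := Finset.card_union_le (low n m) ((TnV n).filter (fun v => v.1+v.2 = m ∧ x+1 ≤ v.1))
    have hc1 : (low n m).card = Tri m := card_low n m (by omega)
    have hc2 := card_diag_filter_ge n m (x+1)
    omega
  refine ⟨st1, st2, st3, ?_⟩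
  intro v hv hsum
  have hsub : (low n m) ∪ ((TnV n).filter (fun u => u.1+u.2 = m ∧ v.1 ≤ u.1)) ⊆ F := by
    intro u hu
    rcases Finset.mem_union.1 hu with h | h
    · rw [mem_low] at h
      exact st2 u (by omega)
    · rw [Finset.mem_filter, mem_TnV] at h
      exact hF.2 v hv u (mem_TnV.2 (by omega)) (Or.inr (by omega))
  have hdisj : Disjoint (low n m) ((TnV n).filter (fun u => u.1+u.2 = m ∧ v.1 ≤ u.1)) := by
    rw [Finset.disjoint_left]
    intro u hu hu2
    rw [mem_low] at hu
    rw [Finset.mem_filter] at hu2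
    omega
  have himg : (Finset.Icc v.1 m).image (fun x => ((x, m - x) : ℕ×ℕ))
      ⊆ (TnV n).filter (fun u => u.1+u.2 = m ∧ v.1 ≤ u.1) := by
    intro u hu
    rw [Finset.mem_image] at hu
    obtain ⟨x, hx, rfl⟩ := hu
    rw [Finset.mem_Icc] at hx
    rw [Finset.mem_filter, mem_TnV]
    refine ⟨by show x + (m-x) ≤ n; omega, by show x + (m-x) = m; omega, by show v.1 ≤ x; omega⟩
  have himgcard : ((Finset.Icc v.1 m).image (fun x => ((x, m - x) : ℕ×ℕ))).card
      = m + 1 - v.1 := by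
    rw [Finset.card_image_of_injOn (fun x hx y hy hxy => by
      have : (((x, m-x) : ℕ×ℕ)).1 = (((y, m-y) : ℕ×ℕ)).1 := by rw [hxy]
      simpa using this)]
    exact Nat.card_Icc v.1 m
  have hv1m : v.1 ≤ m := by have := st1 v hv; omega
  have hcard := Finset.card_le_card hsub
  rw [Finset.card_union_of_disjoint hdisj, card_low n m (by omega)] at hcard
  have hgeq := Finset.card_le_card himg
  omega
private lemma initseg_diag_card (n m : ℕ) (F : Finset (ℕ×ℕ)) (hF : IsInitSeg n F)
    (hmn : m ≤ n) (hlow : Tri m < F.card) (hhigh : F.card ≤ Tri (m+1)) :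
    (F.filter (fun v => v.1+v.2 = m)).card + Tri m = F.card := by
  obtain ⟨st1, st2, _, _⟩ := initseg_struct n m F hF hmn hlow hhigh
  have hsplit : F = (low n m) ∪ F.filter (fun v => v.1+v.2 = m) := by
    ext v
    rw [Finset.mem_union, mem_low, Finset.mem_filter]
    constructor
    · intro hv
      have h1 := st1 v hv
      have h2 := mem_TnV.1 (hF.1 hv)
      rcases Nat.lt_or_ge (v.1+v.2) m with h | h
      · exact Or.inl ⟨h2, h⟩
      · exact Or.inr ⟨hv, by omega⟩
    · intro hv
      rcases hv with h | h
      · exact st2 v h.2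
      · exact h.1
  have hdisj : Disjoint (low n m) (F.filter (fun v => v.1+v.2 = m)) := by
    rw [Finset.disjoint_left]
    intro v hv hv2
    rw [mem_low] at hv
    rw [Finset.mem_filter] at hv2
    omega
  have := congrArg Finset.card hsplit
  rw [Finset.card_union_of_disjoint hdisj, card_low n m (by omega)] at this
  omega

private lemma boundC (n m : ℕ) (C : Finset (ℕ×ℕ)) (hC : IsInitSeg n C)
    (hm1 : m + 1 ≤ n) (hlow : Tri m < C.card) (hhigh : C.card ≤ Tri (m+1)) :
    (boundary n C).card ≤ m + 2 := by
  obtain ⟨st1, st2, st3, st4⟩ := initseg_struct n m C hC (by omega) hlow hhigh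
  have hdiag := initseg_diag_card n m C hC (by omega) hlow hhigh
  have hTm1 : Tri (m+1) = Tri m + (m+1) := Tri_succ m
  have hsub : boundary n C ⊆
      ((TnV n).filter (fun v => v.1+v.2 = m ∧ v ∉ C)) ∪
      ((TnV n).filter (fun v => v.1+v.2 = m+1 ∧ Tri (m+1) ≤ C.card + v.1)) := by
    intro v hv
    obtain ⟨hvT, hvC, u, huC, hadj⟩ := mem_boundary.1 hv
    have hsums := adj_sum hadj
    have hus : u.1 + u.2 ≤ m := st1 u huC
    have hvs : v.1 + v.2 ≤ m + 1 := by omega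
    rw [Finset.mem_union, Finset.mem_filter, Finset.mem_filter]
    rcases Nat.lt_or_ge (v.1+v.2) m with h | h
    · exact absurd (st2 v h) hvC
    · rcases Nat.eq_or_lt_of_le h with h2 | h2
      · exact Or.inl ⟨hvT, h2.symm, hvC⟩
      · have hvs2 : v.1 + v.2 = m + 1 := by omega
        have hus2 : u.1 + u.2 = m := by omega
        have h4 := st4 u huC hus2
        have hle : u.1 ≤ v.1 := adj_fst_up hadj (by omega)
        exact Or.inr ⟨hvT, hvs2, by omega⟩
  have hcardle := Finset.card_le_card hsub
  have hunion := Finset.card_union_le ((TnV n).filter (fun v => v.1+v.2 = m ∧ v ∉ C))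
      ((TnV n).filter (fun v => v.1+v.2 = m+1 ∧ Tri (m+1) ≤ C.card + v.1))
  -- bound the first set
  have hfirst : ((TnV n).filter (fun v => v.1+v.2 = m ∧ v ∉ C)).card
      + (C.filter (fun v => v.1+v.2 = m)).card ≤ m + 1 := by
    have hd : Disjoint ((TnV n).filter (fun v => v.1+v.2 = m ∧ v ∉ C))
        (C.filter (fun v => v.1+v.2 = m)) := by
      rw [Finset.disjoint_left]
      intro v hv hv2
      rw [Finset.mem_filter] at hv hv2
      exact hv.2.2 hv2.1
    have hsub2 : ((TnV n).filter (fun v => v.1+v.2 = m ∧ v ∉ C))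
        ∪ (C.filter (fun v => v.1+v.2 = m)) ⊆ (TnV n).filter (fun v => v.1+v.2 = m) := by
      intro v hv
      rcases Finset.mem_union.1 hv with h | h
      · rw [Finset.mem_filter] at h ⊢; exact ⟨h.1, h.2.1⟩
      · rw [Finset.mem_filter] at h ⊢; exact ⟨hC.1 h.1, h.2⟩
    have h5 := Finset.card_le_card hsub2
    rw [Finset.card_union_of_disjoint hd] at h5
    have h6 : ((TnV n).filter (fun v => v.1+v.2 = m)).card = m+1 := by
      rw [← card_slc, slc_TnV n m (by omega), Finset.card_range]
    omega
  -- bound the second set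
  have hsecond : ((TnV n).filter (fun v => v.1+v.2 = m+1 ∧ Tri (m+1) ≤ C.card + v.1)).card
      ≤ (C.card - Tri m) + 1 := by
    have hsub3 : (TnV n).filter (fun v => v.1+v.2 = m+1 ∧ Tri (m+1) ≤ C.card + v.1)
        ⊆ (TnV n).filter (fun v => v.1+v.2 = m+1 ∧ (m + 1 - (C.card - Tri m)) ≤ v.1) := by
      intro v hv
      rw [Finset.mem_filter] at hv ⊢
      exact ⟨hv.1, hv.2.1, by omega⟩
    have h7 := Finset.card_le_card hsub3
    have h8 := card_diag_filter_ge n (m+1) (m + 1 - (C.card - Tri m))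
    omega
  omega

private lemma final_compl (n : ℕ) (D : Finset (ℕ×ℕ)) (hD : IsFinalSeg n D) :
    IsInitSeg n (TnV n \ D) := by
  constructor
  · exact Finset.sdiff_subset
  · intro v hv u hu hsle
    rw [Finset.mem_sdiff] at hv ⊢
    refine ⟨hu, fun huD => hv.2 ?_⟩
    exact hD.2 u huD v hv.1 hsle

private lemma boundD (n m : ℕ) (D : Finset (ℕ×ℕ)) (hD : IsFinalSeg n D)
    (hmn : m ≤ n) (hlow : Tri m < (TnV n \ D).card) (hhigh : (TnV n \ D).card ≤ Tri (m+1)) :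
    (boundary n D).card ≤ m + 1 := by
  set F := TnV n \ D with hFdef
  have hFinit : IsInitSeg n F := final_compl n D hD
  obtain ⟨st1, st2, st3, st4⟩ := initseg_struct n m F hFinit hmn hlow hhigh
  have hdiag := initseg_diag_card n m F hFinit hmn hlow hhigh
  have hTm1 : Tri (m+1) = Tri m + (m+1) := Tri_succ m
  set t := F.card - Tri m with htdef
  have ht1 : 1 ≤ t := by omega
  have ht2 : t ≤ m + 1 := by omega
  have hsub : boundary n D ⊆
      (F.filter (fun v => v.1+v.2 = m)) ∪
      ((TnV n).filter (fun v => v.1+v.2 + 1 = m ∧ v.1 + t ≤ m)) := by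
    intro v hv
    obtain ⟨hvT, hvD, u, huD, hadj⟩ := mem_boundary.1 hv
    have hvF : v ∈ F := Finset.mem_sdiff.2 ⟨hvT, hvD⟩
    have hvs : v.1 + v.2 ≤ m := st1 v hvF
    have huF : u ∉ F := by
      intro h
      exact (Finset.mem_sdiff.1 h).2 huD
    have hus : m ≤ u.1 + u.2 := by
      by_contra h
      push_neg at h
      exact huF (st2 u h)
    have hsums := adj_sum hadj
    rw [Finset.mem_union, Finset.mem_filter, Finset.mem_filter]
    rcases Nat.eq_or_lt_of_le hvs with h | h
    · exact Or.inl ⟨hvF, h⟩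
    · have hvs2 : v.1 + v.2 + 1 = m := by omega
      have hus2 : u.1 + u.2 = m := by omega
      have hu1 : u.1 + t ≤ m := by
        by_contra hcon
        push_neg at hcon
        have hu1m : u.1 ≤ m := by omega
        have := st3 u.1 hu1m (by omega)
        have hueq : ((u.1, m - u.1) : ℕ×ℕ) = u := by
          have h2 : u.2 = m - u.1 := by omega
          rw [← h2]
        rw [hueq] at this
        exact huF this
      have hle : v.1 ≤ u.1 := adj_fst_down hadj (by omega)
      exact Or.inr ⟨hvT, hvs2, by omega⟩
  have hcardle := Finset.card_le_card hsub
  have hunion := Finset.card_union_le (F.filter (fun v => v.1+v.2 = m))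
      ((TnV n).filter (fun v => v.1+v.2 + 1 = m ∧ v.1 + t ≤ m))
  rcases Nat.lt_or_ge m t with hcase | hcase
  · -- t = m+1 : second set is empty
    have hsecond : ((TnV n).filter (fun v => v.1+v.2 + 1 = m ∧ v.1 + t ≤ m)).card = 0 := by
      rw [Finset.card_eq_zero]
      ext v
      rw [Finset.mem_filter]
      simp only [Finset.notMem_empty, iff_false]
      intro h
      omega
    omega
  · have hsub4 : (TnV n).filter (fun v => v.1+v.2 + 1 = m ∧ v.1 + t ≤ m)
        ⊆ (TnV n).filter (fun v => v.1+v.2 = m - 1 ∧ v.1 ≤ m - t) := by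
      intro v hv
      rw [Finset.mem_filter] at hv ⊢
      exact ⟨hv.1, by omega, by omega⟩
    have h7 := Finset.card_le_card hsub4
    have h8 := card_diag_filter_le n (m-1) (m - t)
    omega
theorem triangular_isoperimetric (n : ℕ) (A C D : Finset (ℕ × ℕ))
    (hA : A ⊆ TnV n)
    (hC : IsInitSeg n C) (hCcard : C.card = A.card)
    (hD : IsFinalSeg n D) (hDcard : D.card = A.card) :
    min (boundary n C).card (boundary n D).card ≤ (boundary n A).card := by
  by_cases hk0 : A.card = 0
  · have hCe : C = ∅ := Finset.card_eq_zero.1 (by omega)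
    have hbCe : boundary n C = ∅ := by
      rw [hCe]
      ext v
      simp [mem_boundary]
    have h1 := min_le_left (boundary n C).card (boundary n D).card
    have h2 : (boundary n C).card = 0 := by rw [hbCe]; rfl
    omega
  by_cases hkN : A.card = (TnV n).card
  · have hDeq : D = TnV n := Finset.eq_of_subset_of_card_le hD.1 (by omega)
    have hbDe : boundary n D = ∅ := by
      rw [hDeq]
      ext v
      simp only [mem_boundary, Finset.notMem_empty, iff_false, not_and]
      intro hvT hvn
      exact absurd hvT hvn
    have h1 := min_le_right (boundary n C).card (boundary n D).card
    have h2 : (boundary n D).card = 0 := by rw [hbDe]; rfl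
    omega
  have hkpos : 1 ≤ A.card := by omega
  have hTcard := card_TnV n
  have hklt : A.card < Tri (n+1) := by
    have := Finset.card_le_card hA
    omega
  set a : ℕ → ℕ := fun i => (slc A i).card with hadef
  set β : ℕ → ℕ := fun i => (slc (boundary n A) i).card with hbdef
  have hka : A.card = ∑ i ∈ Finset.range (n+1), a i := card_eq_sum_slc hA
  have hra : (boundary n A).card = ∑ i ∈ Finset.range (n+1), β i :=
    card_eq_sum_slc (fun v hv => (mem_boundary.1 hv).1)
  have ha : ∀ i, i ≤ n → a i ≤ i + 1 := by
    intro i hi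
    have hsub : slc A i ⊆ Finset.range (i+1) := fun x hx => Finset.mem_range.2 (by
      have := slc_le hA hx; omega)
    have := Finset.card_le_card hsub
    simpa using this
  have hL1 : ∀ i, i < n → 1 ≤ a i → a i + 1 ≤ β (i+1) + a (i+1) := fun i hi h1 =>
    SL1 hA hi h1
  have hL2 : ∀ i, i < n → min (a (i+1)) (i+1) ≤ β i + a i := fun i hi => SL2 hA hi
  have hL3 : ∀ i, i ≤ n → 1 ≤ a i → a i ≤ i → 1 ≤ β i := fun i hi h1 h2 => SL3 hA hi h1 h2
  have hM := master n a β ha hL1 hL2 hL3 (by omega)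
  set r := (boundary n A).card with hrdef
  set k := A.card with hkdef
  rcases hM with h1 | ⟨h2a, h2b⟩
  · -- use the final segment D
    have hc : Tri (n+1) - k ≤ Tri r := by rw [hka, hra] at *; exact h1
    have hc1 : 1 ≤ Tri (n+1) - k := by omega
    have hPn : Tri (n+1) - k ≤ Tri (n+1) := by omega
    have hex : ∃ j, Tri (n+1) - k ≤ Tri (j+1) := ⟨n, hPn⟩
    set m := Nat.find hex with hmdef
    have hm1 : Tri (n+1) - k ≤ Tri (m+1) := Nat.find_spec hex
    have hmn : m ≤ n := Nat.find_le hPn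
    have hm2 : Tri m < Tri (n+1) - k := by
      rcases Nat.eq_zero_or_pos m with h | h
      · rw [h]; show Tri 0 < _; have : Tri 0 = 0 := rfl; omega
      · have := Nat.find_min hex (m := m - 1) (by omega)
        push_neg at this
        rw [show m - 1 + 1 = m by omega] at this
        exact this
    have hrpos : 1 ≤ r := by
      by_contra h
      push_neg at h
      have hr0 : r = 0 := by omega
      rw [hr0] at hc
      have : Tri 0 = 0 := rfl
      omega
    have hmr : m + 1 ≤ r := by
      have : m ≤ r - 1 := Nat.find_le (by rw [show r - 1 + 1 = r by omega]; exact hc)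
      omega
    have hFcard : (TnV n \ D).card = Tri (n+1) - k := by
      rw [Finset.card_sdiff_of_subset hD.1]
      omega
    have hbD := boundD n m D hD hmn (by omega) (by omega)
    have := min_le_right (boundary n C).card (boundary n D).card
    omega
  · -- use the initial segment C
    have hk2 : k ≤ Tri (r - 1) := by rw [hka, hra] at *; exact h2a
    have hk3 : k ≤ Tri n := by rw [hka] at *; exact h2b
    have hn1 : 1 ≤ n := by
      by_contra h
      push_neg at h
      have hn0 : n = 0 := by omega
      rw [hn0] at hk3
      have : Tri 0 = 0 := rfl
      omega
    have hex : ∃ j, k ≤ Tri (j+1) := ⟨n - 1, by rw [show n - 1 + 1 = n by omega]; exact hk3⟩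
    set m := Nat.find hex with hmdef
    have hm1 : k ≤ Tri (m+1) := Nat.find_spec hex
    have hmn : m ≤ n - 1 := Nat.find_le (by rw [show n - 1 + 1 = n by omega]; exact hk3)
    have hm2 : Tri m < k := by
      rcases Nat.eq_zero_or_pos m with h | h
      · rw [h]; show Tri 0 < _; have : Tri 0 = 0 := rfl; omega
      · have := Nat.find_min hex (m := m - 1) (by omega)
        push_neg at this
        rw [show m - 1 + 1 = m by omega] at this
        exact this
    have hrpos : 2 ≤ r := by
      by_contra h
      push_neg at h
      have : Tri (r - 1) = 0 := by
        have hr0 : r - 1 = 0 := by omega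
        rw [hr0]; rfl
      omega
    have hmr : m + 2 ≤ r := by
      have : m ≤ r - 2 := Nat.find_le (by rw [show r - 2 + 1 = r - 1 by omega]; exact hk2)
      omega
    have hbC := boundC n m C hC (by omega) (by omega) (by omega)
    have := min_le_left (boundary n C).card (boundary n D).card
    omega
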